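/- Penalty for unknown outlier existence: for M ≥ 3, fully supported (P_N, P_A) with P_N ≠ P_A, and any λ_2 > 0 and λ_1 > 0, the quantity min{λ_1, Ω_i(λ_2, P_N, P_A)} is strictly less than D_{(M−2)/(M−1)}(P_N‖P_A), where Ω_i is the false-reject exponent function. -/
import Mathlib


open Real Finset Filter

open scoped Classical

variable {X : Type*}

def IsProb [Fintype X] (P : X → ℝ) : Prop := (∀ x, 0 ≤ P x) ∧ ∑ x, P x = 1

noncomputable def KL [Fintype X] (P Q : X → ℝ) : ℝ := ∑ x, P x * Real.log (P x / Q x)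

noncomputable def GJS [Fintype X] (P Q : X → ℝ) (α : ℝ) : ℝ :=
  α * KL P (fun x => (α * P x + Q x) / (1 + α)) + KL Q (fun x => (α * P x + Q x) / (1 + α))

noncomputable def Renyi [Fintype X] (β : ℝ) (P Q : X → ℝ) : ℝ :=
  (1 / (β - 1)) * Real.log (∑ x, P x ^ β * Q x ^ (1 - β))

noncomputable def scoreG [Fintype X] {M : ℕ} (Q : Fin M → X → ℝ) (i : Fin M) : ℝ :=
  ∑ j ∈ Finset.univ.erase i,
    KL (Q j) (fun x => (∑ l ∈ Finset.univ.erase i, Q l x) / ((M : ℝ) - 1))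

noncomputable def OmegaFn [Fintype X] {M : ℕ} (i : Fin M) (lam : ℝ) (PN PA : X → ℝ) : ℝ :=
  sInf {v : ℝ | ∃ j : Fin M, j ≠ i ∧ ∃ Q : Fin M → X → ℝ, (∀ m, IsProb (Q m)) ∧
      scoreG Q j ≤ lam ∧ v = KL (Q i) PA + ∑ t ∈ Finset.univ.erase i, KL (Q t) PN}

lemma term_ge [Fintype X] {P Q : X → ℝ} (hP : ∀ x, 0 ≤ P x) (hQ : ∀ x, 0 < Q x) (x : X) :
    P x - Q x ≤ P x * Real.log (P x / Q x) := by
  rcases eq_or_lt_of_le (hP x) with h | h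
  · simp [← h]
    linarith [(hQ x).le]
  · have hr : 0 < Q x / P x := div_pos (hQ x) h
    have := Real.log_le_sub_one_of_pos hr
    have hlog : Real.log (P x / Q x) = - Real.log (Q x / P x) := by
      rw [← Real.log_inv]; congr 1; field_simp
    have h2 := mul_le_mul_of_nonneg_left this h.le
    have hc : P x * (Q x / P x) = Q x := by field_simp
    rw [mul_sub, mul_one, hc] at h2
    rw [hlog]
    linarith

lemma KL_nonneg [Fintype X] {P Q : X → ℝ} (hP : IsProb P) (hQ : IsProb Q)
    (hQpos : ∀ x, 0 < Q x) : 0 ≤ KL P Q := by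
  have : ∑ x, (P x - Q x) ≤ KL P Q :=
    Finset.sum_le_sum fun x _ => term_ge hP.1 hQpos x
  rw [Finset.sum_sub_distrib, hP.2, hQ.2] at this
  linarith

lemma KL_pos [Fintype X] {P Q : X → ℝ} (hP : IsProb P) (hQ : IsProb Q)
    (hQpos : ∀ x, 0 < Q x) (hne : P ≠ Q) : 0 < KL P Q := by
  obtain ⟨x₀, hx₀⟩ := Function.ne_iff.mp hne
  have hstrict : P x₀ - Q x₀ < P x₀ * Real.log (P x₀ / Q x₀) := by
    rcases eq_or_lt_of_le (hP.1 x₀) with h | h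
    · rw [← h, zero_mul]
      have := hQpos x₀
      linarith
    · have hr : 0 < Q x₀ / P x₀ := div_pos (hQpos x₀) h
      have hr1 : Q x₀ / P x₀ ≠ 1 := by
        intro hc
        apply hx₀
        field_simp at hc
        linarith
      have hlt := Real.log_lt_sub_one_of_pos hr hr1
      have hlog : Real.log (P x₀ / Q x₀) = - Real.log (Q x₀ / P x₀) := by
        rw [← Real.log_inv]; congr 1; field_simp
      have h2 := mul_lt_mul_of_pos_left hlt h
      have hc : P x₀ * (Q x₀ / P x₀) = Q x₀ := by field_simp
      rw [mul_sub, mul_one, hc] at h2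
      rw [hlog]
      linarith
  have : ∑ x, (P x - Q x) < KL P Q := by
    apply Finset.sum_lt_sum (fun x _ => term_ge hP.1 hQpos x) ⟨x₀, Finset.mem_univ _, hstrict⟩
  rw [Finset.sum_sub_distrib, hP.2, hQ.2] at this
  linarith

lemma KL_self [Fintype X] {P : X → ℝ} (hpos : ∀ x, 0 < P x) : KL P P = 0 := by
  unfold KL
  apply Finset.sum_eq_zero
  intro x _
  rw [div_self (hpos x).ne', Real.log_one, mul_zero]

lemma KL_upper [Fintype X] {P Q : X → ℝ} (hP : ∀ x, 0 ≤ P x) (hQ : ∀ x, 0 < Q x) :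
    KL P Q ≤ ∑ x, P x * ((P x - Q x) / Q x) := by
  apply Finset.sum_le_sum
  intro x _
  rcases eq_or_lt_of_le (hP x) with h | h
  · rw [← h, zero_mul, zero_mul]
  · have hr : 0 < P x / Q x := div_pos h (hQ x)
    have h1 := Real.log_le_sub_one_of_pos hr
    have hc : (P x - Q x) / Q x = P x / Q x - 1 := by rw [sub_div, div_self (hQ x).ne']
    have : Real.log (P x / Q x) ≤ (P x - Q x) / Q x := by rw [hc]; linarith
    exact mul_le_mul_of_nonneg_left this h.le

lemma KL_convex_mix [Fintype X] {P Q : X → ℝ} (hPpos : ∀ x, 0 < P x) (hQpos : ∀ x, 0 < Q x)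
    {ε : ℝ} (hε0 : 0 ≤ ε) (hε1 : ε ≤ 1) :
    KL (fun x => (1 - ε) * P x + ε * Q x) Q ≤ (1 - ε) * KL P Q := by
  unfold KL
  rw [Finset.mul_sum]
  apply Finset.sum_le_sum
  intro x _
  have hq := hQpos x
  have hp := hPpos x
  have hcv := Real.convexOn_mul_log.2 (Set.mem_Ici.mpr (div_pos hp hq).le)
      (Set.mem_Ici.mpr zero_le_one) (sub_nonneg.mpr hε1) hε0 (by ring)
  simp only [smul_eq_mul, mul_one, Real.log_one, mul_zero, add_zero] at hcv
  have key : ((1 - ε) * P x + ε * Q x) / Q x = (1 - ε) * (P x / Q x) + ε := by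
    field_simp
  have hrep : (1 - ε) * P x + ε * Q x = Q x * ((1 - ε) * (P x / Q x) + ε) := by
    field_simp
  show ((1 - ε) * P x + ε * Q x) * Real.log (((1 - ε) * P x + ε * Q x) / Q x)
      ≤ (1 - ε) * (P x * Real.log (P x / Q x))
  rw [key, hrep, mul_assoc]
  calc Q x * (((1 - ε) * (P x / Q x) + ε) * Real.log ((1 - ε) * (P x / Q x) + ε))
      ≤ Q x * ((1 - ε) * (P x / Q x * Real.log (P x / Q x))) :=
        mul_le_mul_of_nonneg_left hcv hq.le
    _ = (1 - ε) * (P x * Real.log (P x / Q x)) := by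
        field_simp [hq.ne']

lemma sum_erase_ite {M : ℕ} (hM : 2 ≤ M) (i j : Fin M) (hij : j ≠ i) (a b : ℝ)
    (f : Fin M → ℝ) (hfi : f i = a) (hfb : ∀ l, l ≠ i → l ≠ j → f l = b) :
    ∑ l ∈ Finset.univ.erase j, f l = a + ((M : ℝ) - 2) * b := by
  have hi : i ∈ Finset.univ.erase j := Finset.mem_erase.mpr ⟨hij.symm, Finset.mem_univ _⟩
  rw [← Finset.add_sum_erase _ f hi, hfi]
  congr 1
  rw [Finset.sum_congr rfl (fun l hl => hfb l (Finset.ne_of_mem_erase hl)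
        (Finset.ne_of_mem_erase (Finset.mem_of_mem_erase hl))),
    Finset.sum_const, nsmul_eq_mul]
  congr 1
  rw [Finset.card_erase_of_mem hi, Finset.card_erase_of_mem (Finset.mem_univ j),
    Finset.card_univ, Fintype.card_fin, show M - 1 - 1 = M - 2 from by omega,
    Nat.cast_sub hM]
  norm_num

set_option maxHeartbeats 2000000 in
lemma penalty_aux [Fintype X] {M : ℕ} (hM : 3 ≤ M) (i : Fin M)
    (PN PA : X → ℝ) (hPN : IsProb PN) (hPA : IsProb PA)
    (hPNpos : ∀ x, 0 < PN x) (hPApos : ∀ x, 0 < PA x) (hne : PN ≠ PA)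
    (lam₁ lam₂ : ℝ) (h₁ : 0 < lam₁) (h₂ : 0 < lam₂) :
    min lam₁ (OmegaFn i lam₂ PN PA) < Renyi (((M : ℝ) - 2) / ((M : ℝ) - 1)) PN PA := by
  have hM3 : (3 : ℝ) ≤ (M : ℝ) := by exact_mod_cast hM
  have hM1 : (0 : ℝ) < (M : ℝ) - 1 := by linarith
  have hM2 : (0 : ℝ) < (M : ℝ) - 2 := by linarith
  set β : ℝ := ((M : ℝ) - 2) / ((M : ℝ) - 1) with hβ
  have hβpos : 0 < β := div_pos hM2 hM1
  clear_value β
  have hXne : Nonempty X := by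
    by_contra h
    rw [not_nonempty_iff] at h
    have h2 := hPN.2
    rw [Finset.univ_eq_empty, Finset.sum_empty] at h2
    norm_num at h2
  set c : ℝ := ∑ x, PN x ^ β * PA x ^ (1 - β) with hcdef
  have hcpos : 0 < c :=
    Finset.sum_pos (fun x _ => mul_pos (Real.rpow_pos_of_pos (hPNpos x) _)
      (Real.rpow_pos_of_pos (hPApos x) _)) Finset.univ_nonempty
  clear_value c
  set Qs : X → ℝ := fun x => PN x ^ β * PA x ^ (1 - β) / c with hQs
  have hQsx : ∀ x, Qs x = PN x ^ β * PA x ^ (1 - β) / c := fun _ => rfl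
  clear_value Qs
  have hQspos : ∀ x, 0 < Qs x := fun x => by
    rw [hQsx x]
    exact div_pos (mul_pos (Real.rpow_pos_of_pos (hPNpos x) _)
      (Real.rpow_pos_of_pos (hPApos x) _)) hcpos
  have hQsprob : IsProb Qs := ⟨fun x => (hQspos x).le, by
    simp only [hQsx]
    rw [← Finset.sum_div, ← hcdef, div_self hcpos.ne']⟩
  have hlogQs : ∀ x, Real.log (Qs x)
      = β * Real.log (PN x) + (1 - β) * Real.log (PA x) - Real.log c := by
    intro x
    rw [hQsx x]
    rw [Real.log_div (mul_pos (Real.rpow_pos_of_pos (hPNpos x) _)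
          (Real.rpow_pos_of_pos (hPApos x) _)).ne' hcpos.ne',
      Real.log_mul (Real.rpow_pos_of_pos (hPNpos x) _).ne'
        (Real.rpow_pos_of_pos (hPApos x) _).ne',
      Real.log_rpow (hPNpos x), Real.log_rpow (hPApos x)]
  have hQsne : Qs ≠ PA := by
    intro hQA
    apply hne
    have hk : ∀ x, Real.log (PN x) = Real.log c / β + Real.log (PA x) := by
      intro x
      have h1 := hlogQs x
      rw [hQA] at h1
      have h2 : β * Real.log (PN x) = Real.log c + β * Real.log (PA x) := by linarith
      field_simp
      linarith
    have hPNx : ∀ x, PN x = Real.exp (Real.log c / β) * PA x := by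
      intro x
      have h3 := congrArg Real.exp (hk x)
      rw [Real.exp_log (hPNpos x), Real.exp_add, Real.exp_log (hPApos x)] at h3
      exact h3
    have hsum : (1 : ℝ) = Real.exp (Real.log c / β) := by
      have hs : ∑ x, PN x = ∑ x, Real.exp (Real.log c / β) * PA x :=
        Finset.sum_congr rfl fun x _ => hPNx x
      rw [hPN.2, ← Finset.mul_sum, hPA.2, mul_one] at hs
      exact hs
    funext x
    rw [hPNx x, ← hsum, one_mul]
  have hRenyi : Renyi β PN PA = -(((M : ℝ) - 1) * Real.log c) := by
    unfold Renyi
    rw [← hcdef]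
    have hb1 : 1 / (β - 1) = -((M : ℝ) - 1) := by
      rw [hβ]
      field_simp
      ring
    rw [hb1]
    ring
  have hkey : KL Qs PA + ((M : ℝ) - 2) * KL Qs PN = -(((M : ℝ) - 1) * Real.log c) := by
    unfold KL
    rw [Finset.mul_sum, ← Finset.sum_add_distrib]
    have hterm : ∀ x ∈ Finset.univ, Qs x * Real.log (Qs x / PA x)
        + ((M : ℝ) - 2) * (Qs x * Real.log (Qs x / PN x))
        = Qs x * (-(((M : ℝ) - 1) * Real.log c)) := by
      intro x _
      rw [Real.log_div (hQspos x).ne' (hPApos x).ne',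
        Real.log_div (hQspos x).ne' (hPNpos x).ne', hlogQs x, hβ]
      field_simp
      ring
    rw [Finset.sum_congr rfl hterm, ← Finset.sum_mul, hQsprob.2, one_mul]
  have hRen_eq : Renyi β PN PA = KL Qs PA + ((M : ℝ) - 2) * KL Qs PN := by
    rw [hRenyi, hkey]
  obtain ⟨j, hj⟩ : ∃ j : Fin M, j ≠ i := by
    have hcard : 1 < Fintype.card (Fin M) := by rw [Fintype.card_fin]; omega
    exact Fintype.exists_ne_of_one_lt_card hcard i
  set C : ℝ := ∑ x, 2 * (Qs x + PA x) * PA x / Qs x with hC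
  have hC0 : 0 ≤ C := Finset.sum_nonneg fun x _ => by
    have := hQspos x; have := hPApos x; positivity
  clear_value C
  set K : ℝ := C + 2 * (M : ℝ) with hK
  clear_value K
  have hKpos : 0 < K := by rw [hK]; nlinarith
  set ε : ℝ := min 1 (lam₂ / K) with hεdef
  have hε0 : 0 < ε := lt_min one_pos (div_pos h₂ hKpos)
  have hε1 : ε ≤ 1 := min_le_left _ _
  have hεle : ε ≤ lam₂ / K := min_le_right _ _
  clear_value ε
  have hεK : ε * K ≤ lam₂ := by
    calc ε * K ≤ lam₂ / K * K := mul_le_mul_of_nonneg_right hεle hKpos.le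
      _ = lam₂ := by field_simp
  set Qe : X → ℝ := fun x => (1 - ε) * Qs x + ε * PA x with hQe
  have hQex : ∀ x, Qe x = (1 - ε) * Qs x + ε * PA x := fun _ => rfl
  clear_value Qe
  have hQepos : ∀ x, 0 < Qe x := by
    intro x
    have h1 : 0 ≤ (1 - ε) * Qs x := mul_nonneg (by linarith) (hQspos x).le
    have h2 : 0 < ε * PA x := mul_pos hε0 (hPApos x)
    rw [hQex x]
    linarith
  have hQeprob : IsProb Qe := ⟨fun x => (hQepos x).le, by
    simp only [hQex]
    rw [Finset.sum_add_distrib, ← Finset.mul_sum, ← Finset.mul_sum, hQsprob.2, hPA.2]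
    ring⟩
  set Q : Fin M → X → ℝ := fun t => if t = i then Qe else if t = j then PN else Qs with hQdef
  have hQi : Q i = Qe := by rw [hQdef]; simp
  have hQj : Q j = PN := by rw [hQdef]; simp [hj]
  have hQo : ∀ t, t ≠ i → t ≠ j → Q t = Qs := fun t a b => by rw [hQdef]; simp [a, b]
  clear_value Q
  have hQprob : ∀ m, IsProb (Q m) := by
    intro m
    rcases eq_or_ne m i with rfl | h1
    · rw [hQi]; exact hQeprob
    rcases eq_or_ne m j with rfl | h2
    · rw [hQj]; exact hPN
    · rw [hQo m h1 h2]; exact hQsprob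
  set Mix : X → ℝ := fun x => (Qe x + ((M : ℝ) - 2) * Qs x) / ((M : ℝ) - 1) with hMixdef
  have hMixx : ∀ x, Mix x = (Qe x + ((M : ℝ) - 2) * Qs x) / ((M : ℝ) - 1) := fun _ => rfl
  clear_value Mix
  have hMixpos : ∀ x, 0 < Mix x := fun x => by
    rw [hMixx x]
    exact div_pos (by nlinarith [hQepos x, hQspos x]) hM1
  have hsumQ : ∀ x, ∑ l ∈ Finset.univ.erase j, Q l x = Qe x + ((M : ℝ) - 2) * Qs x := by
    intro x
    exact sum_erase_ite (by omega) i j hj (Qe x) (Qs x) (fun l => Q l x)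
      (congrFun hQi x) (fun l a b => congrFun (hQo l a b) x)
  have hscore_eq : scoreG Q j = KL Qe Mix + ((M : ℝ) - 2) * KL Qs Mix := by
    unfold scoreG
    have hfun : (fun x => (∑ l ∈ Finset.univ.erase j, Q l x) / ((M : ℝ) - 1)) = Mix := by
      funext x; rw [hsumQ x, hMixx x]
    rw [hfun]
    exact sum_erase_ite (by omega) i j hj (KL Qe Mix) (KL Qs Mix)
      (fun l => KL (Q l) Mix) (congrArg (fun P => KL P Mix) hQi)
      (fun l a b => congrArg (fun P => KL P Mix) (hQo l a b))
  have hMix_ge : ∀ x, Qs x / 2 ≤ Mix x := by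
    intro x
    rw [hMixx x, div_le_div_iff₀ two_pos hM1]
    rw [hQex x]
    nlinarith [hQspos x, hPApos x, hε0.le, hε1, mul_nonneg hε0.le (hPApos x).le]
  have hQe_le : ∀ x, Qe x ≤ Qs x + PA x := by
    intro x
    rw [hQex x]
    nlinarith [hQspos x, hPApos x, hε0.le, hε1]
  have hdiff1 : ∀ x, Qe x - Mix x ≤ ε * PA x := by
    intro x
    have hident : Qe x - Mix x = ε * (((M : ℝ) - 2) / ((M : ℝ) - 1)) * (PA x - Qs x) := by
      rw [hMixx x, hQex x]
      field_simp
      ring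
    rw [hident]
    have ht0 : 0 ≤ ((M : ℝ) - 2) / ((M : ℝ) - 1) := (div_pos hM2 hM1).le
    have ht1 : ((M : ℝ) - 2) / ((M : ℝ) - 1) ≤ 1 := by
      rw [div_le_one hM1]; linarith
    nlinarith [mul_nonneg (mul_nonneg hε0.le ht0) (hQspos x).le,
      mul_le_mul_of_nonneg_left ht1 (mul_nonneg hε0.le (hPApos x).le)]
  have hdiff2 : ∀ x, Qs x - Mix x ≤ ε * Qs x := by
    intro x
    have hident : Qs x - Mix x = ε / ((M : ℝ) - 1) * (Qs x - PA x) := by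
      rw [hMixx x, hQex x]
      field_simp
      ring
    rw [hident]
    have hd0 : 0 ≤ ε / ((M : ℝ) - 1) := by positivity
    have hd1 : ε / ((M : ℝ) - 1) ≤ ε := div_le_self hε0.le (by linarith)
    nlinarith [mul_nonneg hd0 (hPApos x).le,
      mul_le_mul_of_nonneg_right hd1 (hQspos x).le]
  have hKL1 : KL Qe Mix ≤ ε * C := by
    calc KL Qe Mix ≤ ∑ x, Qe x * ((Qe x - Mix x) / Mix x) :=
          KL_upper (fun x => (hQepos x).le) hMixpos
      _ ≤ ∑ x, ε * (2 * (Qs x + PA x) * PA x / Qs x) := by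
          apply Finset.sum_le_sum
          intro x _
          have s1 : Qe x * ((Qe x - Mix x) / Mix x) ≤ Qe x * ((ε * PA x) / Mix x) :=
            mul_le_mul_of_nonneg_left
              ((div_le_div_iff_of_pos_right (hMixpos x)).mpr (hdiff1 x)) (hQepos x).le
          have s2 : (ε * PA x) / Mix x ≤ (ε * PA x) / (Qs x / 2) :=
            div_le_div_of_nonneg_left (mul_nonneg hε0.le (hPApos x).le)
              (half_pos (hQspos x)) (hMix_ge x)
          have s3 : Qe x * ((ε * PA x) / Mix x) ≤ (Qs x + PA x) * ((ε * PA x) / (Qs x / 2)) := by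
            apply mul_le_mul (hQe_le x) s2
              (div_nonneg (mul_nonneg hε0.le (hPApos x).le) (hMixpos x).le)
            linarith [hQspos x, hPApos x]
          have s4 : (Qs x + PA x) * ((ε * PA x) / (Qs x / 2))
              = ε * (2 * (Qs x + PA x) * PA x / Qs x) := by
            field_simp
          linarith
      _ = ε * C := by rw [hC, Finset.mul_sum]
  have hKL2 : KL Qs Mix ≤ ε * 2 := by
    calc KL Qs Mix ≤ ∑ x, Qs x * ((Qs x - Mix x) / Mix x) :=
          KL_upper (fun x => (hQspos x).le) hMixpos
      _ ≤ ∑ x, 2 * ε * Qs x := by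
          apply Finset.sum_le_sum
          intro x _
          have s1 : Qs x * ((Qs x - Mix x) / Mix x) ≤ Qs x * ((ε * Qs x) / Mix x) :=
            mul_le_mul_of_nonneg_left
              ((div_le_div_iff_of_pos_right (hMixpos x)).mpr (hdiff2 x)) (hQspos x).le
          have s2 : (ε * Qs x) / Mix x ≤ (ε * Qs x) / (Qs x / 2) :=
            div_le_div_of_nonneg_left (mul_nonneg hε0.le (hQspos x).le)
              (half_pos (hQspos x)) (hMix_ge x)
          have s3 : Qs x * ((ε * Qs x) / Mix x) ≤ Qs x * ((ε * Qs x) / (Qs x / 2)) :=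
            mul_le_mul_of_nonneg_left s2 (hQspos x).le
          have s4 : Qs x * ((ε * Qs x) / (Qs x / 2)) = 2 * ε * Qs x := by
            field_simp [(hQspos x).ne']
          linarith
      _ = ε * 2 := by rw [← Finset.mul_sum, hQsprob.2]; ring
  have hscore : scoreG Q j ≤ lam₂ := by
    rw [hscore_eq]
    have h2' : ((M : ℝ) - 2) * KL Qs Mix ≤ ((M : ℝ) - 2) * (ε * 2) :=
      mul_le_mul_of_nonneg_left hKL2 hM2.le
    have hchain : KL Qe Mix + ((M : ℝ) - 2) * KL Qs Mix ≤ ε * K := by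
      rw [hK]
      nlinarith [hε0.le]
    linarith [hεK]
  have hobj : ∑ t ∈ Finset.univ.erase i, KL (Q t) PN = ((M : ℝ) - 2) * KL Qs PN := by
    have h := sum_erase_ite (show 2 ≤ M by omega) j i hj.symm (KL PN PN) (KL Qs PN)
      (fun t => KL (Q t) PN) (congrArg (fun P => KL P PN) hQj)
      (fun l a b => congrArg (fun P => KL P PN) (hQo l b a))
    rw [h, KL_self hPNpos, zero_add]
  have hKQsPA : 0 < KL Qs PA := KL_pos hQsprob hPA hPApos hQsne
  have hKLQe : KL Qe PA < KL Qs PA := by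
    have hcvx := KL_convex_mix (P := Qs) (Q := PA) hQspos hPApos hε0.le hε1
    rw [hQe]
    nlinarith [mul_pos hε0 hKQsPA]
  have hvS : KL (Q i) PA + ∑ t ∈ Finset.univ.erase i, KL (Q t) PN ∈
      {v : ℝ | ∃ j : Fin M, j ≠ i ∧ ∃ Q : Fin M → X → ℝ, (∀ m, IsProb (Q m)) ∧
        scoreG Q j ≤ lam₂ ∧ v = KL (Q i) PA + ∑ t ∈ Finset.univ.erase i, KL (Q t) PN} :=
    ⟨j, hj, Q, hQprob, hscore, rfl⟩
  have hbdd : BddBelow {v : ℝ | ∃ j : Fin M, j ≠ i ∧ ∃ Q : Fin M → X → ℝ,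
      (∀ m, IsProb (Q m)) ∧ scoreG Q j ≤ lam₂ ∧
      v = KL (Q i) PA + ∑ t ∈ Finset.univ.erase i, KL (Q t) PN} := by
    refine ⟨0, fun w hw => ?_⟩
    obtain ⟨j', hj', Q', hQ', hs', rfl⟩ := hw
    exact add_nonneg (KL_nonneg (hQ' i) hPA hPApos)
      (Finset.sum_nonneg fun t _ => KL_nonneg (hQ' t) hPN hPNpos)
  have hΩ : OmegaFn i lam₂ PN PA ≤ KL (Q i) PA + ∑ t ∈ Finset.univ.erase i, KL (Q t) PN := by
    unfold OmegaFn
    exact csInf_le hbdd hvS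
  have hvlt : KL (Q i) PA + ∑ t ∈ Finset.univ.erase i, KL (Q t) PN < Renyi β PN PA := by
    rw [hQi, hobj, hRen_eq]
    linarith
  calc min lam₁ (OmegaFn i lam₂ PN PA) ≤ OmegaFn i lam₂ PN PA := min_le_right _ _
    _ ≤ KL (Q i) PA + ∑ t ∈ Finset.univ.erase i, KL (Q t) PN := hΩ
    _ < Renyi β PN PA := hvlt

theorem penalty_unknown_outlier [Fintype X] {M : ℕ} (hM : 3 ≤ M) (i : Fin M)
    (PN PA : X → ℝ) (hPN : IsProb PN) (hPA : IsProb PA)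
    (hPNpos : ∀ x, 0 < PN x) (hPApos : ∀ x, 0 < PA x) (hne : PN ≠ PA)
    (lam₁ lam₂ : ℝ) (h₁ : 0 < lam₁) (h₂ : 0 < lam₂) :
    min lam₁ (OmegaFn i lam₂ PN PA) < Renyi (((M : ℝ) - 2) / ((M : ℝ) - 1)) PN PA :=
  penalty_aux hM i PN PA hPN hPA hPNpos hPApos hne lam₁ lam₂ h₁ h₂
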